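/- arXiv:2310.02073 — 2 statements merged into one kernel-verified Lean document; each statement's English description precedes it below -/
import Mathlib

section
/- Let p be an odd prime and G a finite p-group. Then η(G)/η(G)^p equals the center of G/η(G)^p. -/
/-!
Write `η = η(G)` and let `Z` be the preimage of the center of `G/η^p`, i.e. the largest `Z` with
`[Z, G] ≤ η^p`. Every normal `N` with `[N, G] ≤ N^p` satisfies `[N, G] ≤ η^p`, so `η ≤ Z`.
Then `[Z, G] ≤ η^p ≤ Z^p`, so `Z` is itself powerfully embedded and `Z ≤ η`.
-/

/-- The subgroup generated by `p`-th powers of elements of `N`. -/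
def pPow {G : Type*} [Group G] (p : ℕ) (N : Subgroup G) : Subgroup G :=
  Subgroup.closure ((fun x => x ^ p) '' (N : Set G))

theorem pPow_normal {G : Type*} [Group G] (p : ℕ) {N : Subgroup G} (hN : N.Normal) :
    (pPow p N).Normal := by
  constructor
  intro x hx g
  have h : pPow p N ≤ Subgroup.comap (MulAut.conj g).toMonoidHom (pPow p N) := by
    rw [pPow, Subgroup.closure_le]
    rintro - ⟨n, hn, rfl⟩
    have : (MulAut.conj g) (n ^ p) = (g * n * g⁻¹) ^ p := by
      simp [MulAut.conj_apply, conj_pow]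
    refine Subgroup.mem_comap.2 ?_
    show (MulAut.conj g) (n ^ p) ∈ _
    rw [this]
    exact Subgroup.subset_closure ⟨g * n * g⁻¹, hN.conj_mem n hn g, rfl⟩
  simpa using h hx

theorem normal_sSup {G : Type*} [Group G] {S : Set (Subgroup G)}
    (hS : ∀ N ∈ S, N.Normal) : (sSup S).Normal := by
  constructor
  intro x hx g
  have h : sSup S ≤ Subgroup.comap (MulAut.conj g).toMonoidHom (sSup S) := by
    refine sSup_le fun N hN => le_trans ?_ (Subgroup.comap_mono (le_sSup hN))
    intro n hn
    exact Subgroup.mem_comap.2 (by simpa using (hS N hN).conj_mem n hn g)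
  simpa using h hx

/-- The upper η-series: `η₀ = 1`, and `η_{i+1}/η_i = η(G/η_i)` is the product of all
powerfully embedded subgroups of `G/η_i`. -/
def etaUp (p : ℕ) (G : Type*) [Group G] : ℕ → Subgroup G
  | 0 => ⊥
  | i + 1 => sSup {N : Subgroup G | N.Normal ∧ ⁅N, (⊤ : Subgroup G)⁆ ≤ pPow p N ⊔ etaUp p G i}

instance etaUp_normal (p : ℕ) (G : Type*) [Group G] (i : ℕ) : (etaUp p G i).Normal := by
  cases i with
  | zero => show (⊥ : Subgroup G).Normal; infer_instance
  | succ i => exact normal_sSup fun N hN => hN.1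

/-- The powerful class of `G`. -/
noncomputable def pwc (p : ℕ) (G : Type*) [Group G] : ℕ := sInf {k | etaUp p G k = ⊤}

/-- Iterated commutator `[N, G, G, ..., G]` with `i` copies of `G`. -/
def itComm {G : Type*} [Group G] (N : Subgroup G) : ℕ → Subgroup G
  | 0 => N
  | i + 1 => ⁅itComm N i, (⊤ : Subgroup G)⁆

/-- `N` is PF-embedded in `G`: it admits a potent filtration. -/
def PFEmbedded {G : Type*} [Group G] (p : ℕ) (N : Subgroup G) : Prop :=
  ∃ (s : ℕ) (M : ℕ → Subgroup G), M 0 = N ∧ M s = ⊥ ∧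
    (∀ i, M (i + 1) ≤ M i) ∧ (∀ i, (M i).Normal) ∧
    (∀ i, ⁅M i, (⊤ : Subgroup G)⁆ ≤ M (i + 1)) ∧
    (∀ i, itComm (M i) (p - 1) ≤ pPow p (M (i + 1)))

instance instPPowEtaNormal (p : ℕ) (G : Type*) [Group G] : (pPow p (etaUp p G 1)).Normal :=
  pPow_normal p (etaUp_normal p G 1)

section

variable {G : Type*} [Group G]

lemma pPow_mono (p : ℕ) {M N : Subgroup G} (h : M ≤ N) : pPow p M ≤ pPow p N :=
  Subgroup.closure_mono (Set.image_mono h)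

lemma commutator_top_le_iff_le_comap_center (H K : Subgroup G) [K.Normal] :
    ⁅H, (⊤ : Subgroup G)⁆ ≤ K ↔
      H ≤ (Subgroup.center (G ⧸ K)).comap (QuotientGroup.mk' K) := by
  rw [← Subgroup.upperCentralSeriesStep_eq_comap_center, Subgroup.commutator_le]
  simp only [Subgroup.mem_top, true_implies, SetLike.le_def, Subgroup.mem_upperCentralSeriesStep]

lemma etaUp_one_eq (p : ℕ) :
    etaUp p G 1 = sSup {N : Subgroup G | N.Normal ∧ ⁅N, (⊤ : Subgroup G)⁆ ≤ pPow p N} := by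
  simp only [etaUp, sup_bot_eq]

lemma etaUp_one_eq_comap_center (p : ℕ) :
    etaUp p G 1 = (Subgroup.center (G ⧸ pPow p (etaUp p G 1))).comap (QuotientGroup.mk' _) := by
  set Z := (Subgroup.center (G ⧸ pPow p (etaUp p G 1))).comap (QuotientGroup.mk' _)
  have eta_le : etaUp p G 1 ≤ Z := by
    conv_lhs => rw [etaUp_one_eq]
    refine sSup_le fun N ⟨hN_normal, hN⟩ => ?_
    have hNη : N ≤ etaUp p G 1 := by rw [etaUp_one_eq]; exact le_sSup ⟨hN_normal, hN⟩
    exact (commutator_top_le_iff_le_comap_center _ _).1 (hN.trans (pPow_mono p hNη))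
  have hZ : ⁅Z, (⊤ : Subgroup G)⁆ ≤ pPow p Z :=
    ((commutator_top_le_iff_le_comap_center _ _).2 le_rfl).trans (pPow_mono p eta_le)
  refine le_antisymm eta_le ?_
  rw [etaUp_one_eq]
  exact le_sSup ⟨Subgroup.Normal.comap inferInstance _, hZ⟩

end

theorem eta_mod_pPow_eq_center_general {p : ℕ}
    {G : Type*} [Group G] :
    Subgroup.map (QuotientGroup.mk' (pPow p (etaUp p G 1))) (etaUp p G 1) =
      Subgroup.center (G ⧸ pPow p (etaUp p G 1)) := by
  calc _ = ((Subgroup.center _).comap (QuotientGroup.mk' _)).map (QuotientGroup.mk' _) :=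
        congrArg _ (etaUp_one_eq_comap_center p)
    _ = _ := Subgroup.map_comap_eq_self_of_surjective (QuotientGroup.mk'_surjective _) _

/-- `η(G)/η(G)^p` is the center of `G/η(G)^p`. -/
theorem eta_mod_pPow_eq_center {p : ℕ} (hp : p.Prime) (hodd : Odd p)
    {G : Type*} [Group G] [Finite G] (hG : IsPGroup p G) :
    Subgroup.map (QuotientGroup.mk' (pPow p (etaUp p G 1))) (etaUp p G 1) =
      Subgroup.center (G ⧸ pPow p (etaUp p G 1)) :=
  eta_mod_pPow_eq_center_general
end

section
/- Let p be an odd prime and G a finite p-group. Then for every i ≥ 0, the i-th term of the upper central series Z_i(G) is contained in η_i(G). In particular, if G is nilpotent of class c, then the powerful class of G is at most c. -/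
/-! A normal subgroup `N` with `[N, G] ≤ η_i(G)` is central modulo `η_i(G)`, hence trivially
powerfully embedded there, so `N ≤ η_{i+1}(G)`. Since `[Z_{i+1}(G), G] ≤ Z_i(G)`, induction
on `i` gives `Z_i(G) ≤ η_i(G)`, and `Z_c(G) = G` forces `η_c(G) = G`. -/

section EtaUp

variable {p : ℕ} {G : Type*} [Group G]

theorem le_etaUp_succ {N : Subgroup G} {i : ℕ} (hN : N.Normal)
    (hcomm : ⁅N, (⊤ : Subgroup G)⁆ ≤ etaUp p G i) : N ≤ etaUp p G (i + 1) :=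
  le_sSup ⟨hN, hcomm.trans le_sup_right⟩

theorem upperCentralSeries_le_etaUp (i : ℕ) :
    Subgroup.upperCentralSeries G i ≤ etaUp p G i := by
  induction i with
  | zero => exact bot_le
  | succ i ih =>
    exact le_etaUp_succ inferInstance ((Subgroup.commutator_upperCentralSeries_top_le G i).trans ih)

theorem pwc_le_of_etaUp_eq_top {k : ℕ} (h : etaUp p G k = ⊤) : pwc p G ≤ k :=
  Nat.sInf_le h

end EtaUp

theorem upperCentral_le_etaUp_general {p : ℕ}
    {G : Type*} [Group G] [Group.IsNilpotent G] :
    (∀ i, upperCentralSeries G i ≤ etaUp p G i) ∧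
      pwc p G ≤ Group.nilpotencyClass G := by
  refine ⟨upperCentralSeries_le_etaUp, pwc_le_of_etaUp_eq_top (top_le_iff.mp ?_)⟩
  calc ⊤ = Subgroup.upperCentralSeries G (Group.nilpotencyClass G) :=
        Subgroup.upperCentralSeries_nilpotencyClass.symm
    _ ≤ etaUp p G (Group.nilpotencyClass G) := upperCentralSeries_le_etaUp _

/-- `Z_i(G) ≤ η_i(G)` for all `i`; in particular the powerful class of a
nilpotent group is at most its nilpotency class. -/
theorem upperCentral_le_etaUp {p : ℕ} (hp : p.Prime) (hodd : Odd p)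
    {G : Type*} [Group G] [Finite G] [Group.IsNilpotent G] (hG : IsPGroup p G) :
    (∀ i, upperCentralSeries G i ≤ etaUp p G i) ∧
      pwc p G ≤ Group.nilpotencyClass G :=
  upperCentral_le_etaUp_general
end
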